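/- Let R be a commutative ring, Ã ∈ R^{l1×l0}, Ñ ∈ R^{m1×m0}, L̃ ∈ R^{l1'×l0'} matrices, and φ ∈ R^{l0×m0} with ⟨Ãφ⟩ ≤ ⟨Ñ⟩, inducing φ̄ : coker(Ã) → coker(Ñ). Let T_M be the stacked matrix (Ã ⊗ I_{l0'} over I_{l0} ⊗ L̃) and T_N the stacked matrix (Ñ ⊗ I_{l0'} over I_{m0} ⊗ L̃). Then ⟨T_M (φ ⊗ I_{l0'})⟩ ≤ ⟨T_N⟩, so right multiplication by the Kronecker product φ ⊗ I_{l0'} induces an R-linear map coker(T_M) → coker(T_N), and under the isomorphisms coker(T_M) ≅ coker(Ã) ⊗_R coker(L̃) and coker(T_N) ≅ coker(Ñ) ⊗_R coker(L̃) this induced map equals φ̄ ⊗ id_{coker(L̃)}. -/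

import Mathlib

open Matrix

section Preamble

variable {R : Type*} [Ring R]

/-- `⟨A⟩`: the left `R`-submodule of row vectors `R^{1×q}` generated by the rows
of the matrix `A`. -/
def rowSpan {m : Type*} {q : ℕ} (A : Matrix m (Fin q) R) : Submodule R (Fin q → R) :=
  Submodule.span R (Set.range A)

theorem rowSpan_le_iff {m : Type*} {q : ℕ} {A : Matrix m (Fin q) R}
    {N : Submodule R (Fin q → R)} : rowSpan A ≤ N ↔ ∀ i, A i ∈ N := by
  simp only [rowSpan, Submodule.span_le]
  exact Set.range_subset_iff

/-- A matrix `φ` with `⟨Aφ⟩ ≤ ⟨B⟩` induces an `R`-linear map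
`coker A → coker B`, `x + ⟨A⟩ ↦ xφ + ⟨B⟩`. -/
def inducedMap {m m' : Type*} {q q' : ℕ} (A : Matrix m (Fin q) R) (B : Matrix m' (Fin q') R)
    (φ : Matrix (Fin q) (Fin q') R) (h : rowSpan (A * φ) ≤ rowSpan B) :
    ((Fin q → R) ⧸ rowSpan A) →ₗ[R] ((Fin q' → R) ⧸ rowSpan B) :=
  Submodule.mapQ _ _ φ.vecMulLinear (by
    rw [rowSpan, Submodule.span_le]
    rintro _ ⟨i, rfl⟩
    have hAi : φ.vecMulLinear (A i) = (A * φ) i := by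
      ext j
      simp [Matrix.vecMulLinear_apply, Matrix.mul_apply, Matrix.vecMul, dotProduct]
    have hmem := h (Submodule.subset_span ⟨i, rfl⟩)
    simp only [SetLike.mem_coe, Submodule.mem_comap, hAi]
    exact hmem)

end Preamble

/-- The row-major vectorization `row(A) ∈ R^{1×mn}` of a matrix `A ∈ R^{m×n}`:
`row(A)_{i·n+j} = A_{ij}` (`0`-indexed). -/
def rowVec {R : Type*} [Ring R] {m n : ℕ} (A : Matrix (Fin m) (Fin n) R) :
    Fin (m * n) → R :=
  fun k => A (finProdFinEquiv.symm k).1 (finProdFinEquiv.symm k).2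

/-- The Kronecker product `A ⊗ B := (a_{ij}B)`, reindexed so as to be indexed by
`Fin (m*p)` and `Fin (n*q)` in the row-major way. -/
def kron {R : Type*} [Ring R] {m n p q : ℕ} (A : Matrix (Fin m) (Fin n) R)
    (B : Matrix (Fin p) (Fin q) R) : Matrix (Fin (m * p)) (Fin (n * q)) R :=
  Matrix.reindex finProdFinEquiv finProdFinEquiv (Matrix.kroneckerMap (· * ·) A B)

/-- The row vector `x ⊗ y ∈ R^{1×ab}` corresponding to `x ∈ R^{1×a}`, `y ∈ R^{1×b}` under
the row-major identification `R^{1×a} ⊗ R^{1×b} ≅ R^{1×ab}`, `eᵢ ⊗ eⱼ ↦ e_{i·b+j}`. -/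
def tensorRow {R : Type*} [Ring R] {a b : ℕ} (x : Fin a → R) (y : Fin b → R) :
    Fin (a * b) → R :=
  fun k => x (finProdFinEquiv.symm k).1 * y (finProdFinEquiv.symm k).2

/-!
Both maps are determined by their values on the classes of the basis rows `eᵢ ⊗ eⱼ`, and there
they agree by the mixed-product rule `(x ⊗ y)(φ ⊗ I) = xφ ⊗ y`. The inclusion of row spans is a
matrix identity as well: `⟨P⟩ ≤ ⟨Q⟩` means `P = XQ` for some `X`, so by the mixed-product rule
`T_M (φ ⊗ I)`, which stacks `Aφ ⊗ I` over `φ ⊗ L`, has its rows in `⟨N ⊗ I⟩ + ⟨I ⊗ L⟩`.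
-/

section RowSpan

variable {R : Type*} [Ring R] {k m m' : Type*} {q : ℕ}

lemma rowSpan_le_rowSpan_iff [Fintype m] {P : Matrix k (Fin q) R} {Q : Matrix m (Fin q) R} :
    rowSpan P ≤ rowSpan Q ↔ ∃ X : Matrix k m R, X * Q = P := by
  rw [rowSpan_le_iff]
  constructor
  · intro hP
    choose X hX using fun i => (Submodule.mem_span_range_iff_exists_fun R).mp (hP i)
    exact ⟨X, funext fun i => by rw [← hX i, ← vecMul_eq_sum]; rfl⟩
  · rintro ⟨X, rfl⟩ i
    exact (Submodule.mem_span_range_iff_exists_fun R).mpr ⟨X i, (vecMul_eq_sum _ _).symm⟩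

lemma rowSpan_fromRows (X : Matrix m (Fin q) R) (Y : Matrix m' (Fin q) R) :
    rowSpan (fromRows X Y) = rowSpan X ⊔ rowSpan Y :=
  (congrArg (Submodule.span R) (Set.Sum.elim_range (X : m → Fin q → R) Y)).trans
    (Submodule.span_union _ _)

lemma rowSpan_mul_le [Fintype m] (X : Matrix k m R) (Q : Matrix m (Fin q) R) :
    rowSpan (X * Q) ≤ rowSpan Q :=
  rowSpan_le_rowSpan_iff.mpr ⟨X, rfl⟩

lemma inducedMap_mk {q' : ℕ} (A : Matrix m (Fin q) R) (B : Matrix m' (Fin q') R)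
    (φ : Matrix (Fin q) (Fin q') R) (h : rowSpan (A * φ) ≤ rowSpan B) (x : Fin q → R) :
    inducedMap A B φ h (Submodule.Quotient.mk x) = Submodule.Quotient.mk (x ᵥ* φ) :=
  rfl

end RowSpan

section Kronecker

variable {R : Type*} [CommRing R] {a b c d e f : ℕ}

lemma kron_mul_kron (P : Matrix (Fin a) (Fin b) R) (P' : Matrix (Fin b) (Fin c) R)
    (Q : Matrix (Fin d) (Fin e) R) (Q' : Matrix (Fin e) (Fin f) R) :
    kron P Q * kron P' Q' = kron (P * P') (Q * Q') := by
  simp only [kron, reindex_apply, submatrix_mul_equiv, mul_kronecker_mul]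

lemma rowSpan_kron_le_kron {P : Matrix (Fin a) (Fin c) R} {P' : Matrix (Fin b) (Fin c) R}
    (hP : rowSpan P ≤ rowSpan P') (Q : Matrix (Fin d) (Fin e) R) :
    rowSpan (kron P Q) ≤ rowSpan (kron P' Q) := by
  obtain ⟨X, rfl⟩ := rowSpan_le_rowSpan_iff.mp hP
  have := rowSpan_mul_le (kron X (1 : Matrix (Fin d) (Fin d) R)) (kron P' Q)
  rwa [kron_mul_kron, Matrix.one_mul] at this

lemma tensorRow_vecMul_kron (x : Fin a → R) (y : Fin b → R)
    (P : Matrix (Fin a) (Fin c) R) (Q : Matrix (Fin b) (Fin d) R) :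
    tensorRow x y ᵥ* kron P Q = tensorRow (x ᵥ* P) (y ᵥ* Q) := by
  funext k
  simp only [vecMul, dotProduct, tensorRow, kron, reindex_apply, submatrix_apply,
    kroneckerMap_apply, ← finProdFinEquiv.sum_comp, Equiv.symm_apply_apply,
    Fintype.sum_prod_type, Finset.sum_mul_sum]
  exact Finset.sum_congr rfl fun i _ => Finset.sum_congr rfl fun j _ => by ring

lemma tensorRow_single (i : Fin a) (j : Fin b) :
    tensorRow (Pi.single i (1 : R)) (Pi.single j 1) = Pi.single (finProdFinEquiv (i, j)) 1 := by
  funext k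
  obtain ⟨⟨i', j'⟩, rfl⟩ := finProdFinEquiv.surjective k
  simp only [tensorRow, Equiv.symm_apply_apply, Pi.single_apply,
    EmbeddingLike.apply_eq_iff_eq, Prod.mk.injEq, ite_and, mul_ite, mul_one, mul_zero]
  split_ifs <;> rfl

end Kronecker

open TensorProduct in
/-- Right multiplication by the Kronecker product `φ ⊗ I` induces a map
`coker T_M → coker T_N` which, under the canonical isomorphisms
`coker T_M ≅ coker Ã ⊗ coker L̃` and `coker T_N ≅ coker Ñ ⊗ coker L̃`, equals
`φ̄ ⊗ id`. -/
theorem statement_12 {R : Type*} [CommRing R] {l1 l0 m1 m0 l1' l0' : ℕ}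
    (A : Matrix (Fin l1) (Fin l0) R) (N : Matrix (Fin m1) (Fin m0) R)
    (L : Matrix (Fin l1') (Fin l0') R)
    (φ : Matrix (Fin l0) (Fin m0) R) (h : rowSpan (A * φ) ≤ rowSpan N) :
    let TM := Matrix.fromRows (kron A (1 : Matrix (Fin l0') (Fin l0') R))
      (kron (1 : Matrix (Fin l0) (Fin l0) R) L)
    let TN := Matrix.fromRows (kron N (1 : Matrix (Fin l0') (Fin l0') R))
      (kron (1 : Matrix (Fin m0) (Fin m0) R) L)
    ∃ h' : rowSpan (TM * kron φ (1 : Matrix (Fin l0') (Fin l0') R)) ≤ rowSpan TN,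
      ∀ (eM : ((Fin (l0 * l0') → R) ⧸ rowSpan TM) ≃ₗ[R]
            ((((Fin l0 → R) ⧸ rowSpan A)) ⊗[R] ((Fin l0' → R) ⧸ rowSpan L)))
        (eN : ((Fin (m0 * l0') → R) ⧸ rowSpan TN) ≃ₗ[R]
            ((((Fin m0 → R) ⧸ rowSpan N)) ⊗[R] ((Fin l0' → R) ⧸ rowSpan L))),
        (∀ (x : Fin l0 → R) (y : Fin l0' → R),
          eM (Submodule.Quotient.mk (tensorRow x y))
            = Submodule.Quotient.mk x ⊗ₜ[R] Submodule.Quotient.mk y) →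
        (∀ (x : Fin m0 → R) (y : Fin l0' → R),
          eN (Submodule.Quotient.mk (tensorRow x y))
            = Submodule.Quotient.mk x ⊗ₜ[R] Submodule.Quotient.mk y) →
        ∀ z, eN (inducedMap TM TN (kron φ (1 : Matrix (Fin l0') (Fin l0') R)) h' z)
          = TensorProduct.map (inducedMap A N φ h) LinearMap.id (eM z) := by
  intro TM TN
  have hφ : rowSpan φ ≤ rowSpan (1 : Matrix (Fin m0) (Fin m0) R) :=
    rowSpan_le_rowSpan_iff.mpr ⟨φ, Matrix.mul_one φ⟩
  have h' : rowSpan (TM * kron φ (1 : Matrix (Fin l0') (Fin l0') R)) ≤ rowSpan TN := by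
    rw [fromRows_mul, kron_mul_kron, kron_mul_kron, Matrix.one_mul, Matrix.one_mul,
      Matrix.mul_one, rowSpan_fromRows, rowSpan_fromRows]
    exact sup_le_sup (rowSpan_kron_le_kron h 1) (rowSpan_kron_le_kron hφ L)
  refine ⟨h', fun eM eN hM hN => ?_⟩
  suffices eN.toLinearMap ∘ₗ inducedMap TM TN (kron φ 1) h' = map (inducedMap A N φ h) .id ∘ₗ eM
    from LinearMap.congr_fun this
  refine Submodule.linearMap_qext _ ((Pi.basisFun R _).ext fun k => ?_)
  obtain ⟨⟨i, j⟩, rfl⟩ := finProdFinEquiv.surjective k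
  simp only [LinearMap.comp_apply, Submodule.mkQ_apply, LinearEquiv.coe_coe,
    Pi.basisFun_apply, ← tensorRow_single]
  rw [inducedMap_mk, tensorRow_vecMul_kron, vecMul_one, hN, hM, map_tmul, inducedMap_mk,
    LinearMap.id_apply]
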